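/- arXiv:2406.13371 — 2 statements merged into one kernel-verified Lean document; each statement's English description precedes it below -/
import Mathlib

section
/- Let f : ℝⁿ → ℝⁿ be continuously differentiable such that the Jacobian matrix J_f(s) is lower triangular and invertible at every point s, and let μ be a probability measure on ℝⁿ. Then C_IMA(f, μ) = 0 if and only if J_f(s) is a diagonal matrix for μ-almost every s; otherwise C_IMA(f, μ) > 0. -/
open MeasureTheory
open scoped BigOperators ENNReal

/-- The Euclidean norm of the `i`-th column of a square real matrix. -/
noncomputable def columnNorm {n : ℕ} (W : Matrix (Fin n) (Fin n) ℝ) (i : Fin n) : ℝ :=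
  Real.sqrt (∑ j, (W j i) ^ 2)

/-- The local IMA contrast of a square real matrix `W` with columns `w₁, …, w_n`:
`c(W) = ∑ i, log ‖wᵢ‖ − log |det W|`. -/
noncomputable def localIMAContrast {n : ℕ} (W : Matrix (Fin n) (Fin n) ℝ) : ℝ :=
  (∑ i, Real.log (columnNorm W i)) - Real.log |W.det|

/-- The Jacobian matrix of `f : ℝⁿ → ℝⁿ` at `s`: `(J_f(s))_{ij} = ∂f_i/∂s_j (s)`. -/
noncomputable def jacobian {n : ℕ} (f : (Fin n → ℝ) → (Fin n → ℝ)) (s : Fin n → ℝ) :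
    Matrix (Fin n) (Fin n) ℝ :=
  Matrix.of fun i j => fderiv ℝ f s (Pi.single j 1) i

/-- The global IMA contrast `C_IMA(f, μ) = ∫ c(J_f(s)) dμ(s)`, as a Lebesgue integral
in `[0, ∞]` of the (nonnegative) local IMA contrast of the Jacobian. -/
noncomputable def globalIMAContrast {n : ℕ} (f : (Fin n → ℝ) → (Fin n → ℝ))
    (μ : Measure (Fin n → ℝ)) : ℝ≥0∞ :=
  ∫⁻ s, ENNReal.ofReal (localIMAContrast (jacobian f s)) ∂μ

lemma abs_diag_le_columnNorm {n : ℕ} (W : Matrix (Fin n) (Fin n) ℝ) (i : Fin n) :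
    |W i i| ≤ columnNorm W i := by
  rw [columnNorm, ← Real.sqrt_sq_eq_abs]
  exact Real.sqrt_le_sqrt
    (Finset.single_le_sum (f := fun j => (W j i) ^ 2) (fun j _ => sq_nonneg _)
      (Finset.mem_univ i))

lemma local_key {n : ℕ} (W : Matrix (Fin n) (Fin n) ℝ)
    (hU : IsUnit W.det) (htri : ∀ i j : Fin n, i < j → W i j = 0) :
    0 ≤ localIMAContrast W ∧
      (localIMAContrast W = 0 ↔ ∀ i j : Fin n, i ≠ j → W i j = 0) := by
  have hdet : W.det = ∏ i, W i i :=
    Matrix.det_of_lowerTriangular W (fun i j h => htri i j h)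
  have hdne : W.det ≠ 0 := hU.ne_zero
  have hdiag : ∀ i, W i i ≠ 0 := by
    intro i h0
    exact hdne (hdet ▸ Finset.prod_eq_zero (Finset.mem_univ i) h0)
  have habs : ∀ i, (0 : ℝ) < |W i i| := fun i => abs_pos.2 (hdiag i)
  have hcolpos : ∀ i, 0 < columnNorm W i :=
    fun i => lt_of_lt_of_le (habs i) (abs_diag_le_columnNorm W i)
  have hsum : localIMAContrast W
      = ∑ i, (Real.log (columnNorm W i) - Real.log |W i i|) := by
    rw [localIMAContrast, Finset.sum_sub_distrib, hdet, Finset.abs_prod,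
      Real.log_prod (fun i _ => abs_ne_zero.2 (hdiag i))]
  have hterm : ∀ i, 0 ≤ Real.log (columnNorm W i) - Real.log |W i i| := by
    intro i
    have := Real.log_le_log (habs i) (abs_diag_le_columnNorm W i)
    linarith
  constructor
  · rw [hsum]; exact Finset.sum_nonneg fun i _ => hterm i
  · rw [hsum, Finset.sum_eq_zero_iff_of_nonneg (fun i _ => hterm i)]
    constructor
    · intro h i j hij
      rcases lt_or_gt_of_ne hij with h1 | h1
      · exact htri i j h1
      · have hz := h j (Finset.mem_univ j)
        have hlog : Real.log (columnNorm W j) = Real.log |W j j| := by linarith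
        have hcolj : columnNorm W j = |W j j| := by
          rw [← Real.exp_log (hcolpos j), hlog, Real.exp_log (habs j)]
        have hsq : ∑ k, (W k j) ^ 2 = (W j j) ^ 2 := by
          have := congrArg (· ^ 2) hcolj
          simpa [columnNorm,
            Real.sq_sqrt (Finset.sum_nonneg fun k _ => sq_nonneg (W k j)), sq_abs]
            using this
        have hrest : ∑ k ∈ Finset.univ.erase j, (W k j) ^ 2 = 0 := by
          have hadd := Finset.add_sum_erase Finset.univ (fun k => (W k j) ^ 2)
            (Finset.mem_univ j)
          have hadd' : (W j j) ^ 2 + ∑ k ∈ Finset.univ.erase j, (W k j) ^ 2 = ∑ k, (W k j) ^ 2 := hadd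
          linarith
        have hzero := (Finset.sum_eq_zero_iff_of_nonneg
          (fun k _ => sq_nonneg (W k j))).1 hrest i
          (Finset.mem_erase.2 ⟨hij, Finset.mem_univ i⟩)
        exact pow_eq_zero_iff two_ne_zero |>.mp hzero
    · intro h i _
      have hsq : ∑ j, (W j i) ^ 2 = (W i i) ^ 2 := by
        rw [Finset.sum_eq_single i]
        · intro b _ hb; rw [h b i hb]; ring
        · intro hi; exact absurd (Finset.mem_univ i) hi
      rw [columnNorm] at *
      rw [show Real.sqrt (∑ j, (W j i) ^ 2) = |W i i| by
        rw [hsq, Real.sqrt_sq_eq_abs]]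
      ring

/-- **Triangular Jacobian and the global IMA contrast.**
If `f : ℝⁿ → ℝⁿ` is `C¹` with a lower-triangular invertible Jacobian at every point and
`μ` is a probability measure, then `C_IMA(f, μ) = 0` if and only if the Jacobian is a
diagonal matrix `μ`-almost everywhere; otherwise `C_IMA(f, μ) > 0`. -/
theorem globalIMAContrast_triangular_eq_zero_iff_ae_diagonal
    {n : ℕ} (f : (Fin n → ℝ) → (Fin n → ℝ)) (μ : Measure (Fin n → ℝ))
    [IsProbabilityMeasure μ]
    (hf : ContDiff ℝ 1 f)
    (hJ : ∀ s, IsUnit (jacobian f s).det)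
    (htri : ∀ s, ∀ i j : Fin n, i < j → jacobian f s i j = 0) :
    (globalIMAContrast f μ = 0 ↔
        ∀ᵐ s ∂μ, ∀ i j : Fin n, i ≠ j → jacobian f s i j = 0) ∧
    ((¬ ∀ᵐ s ∂μ, ∀ i j : Fin n, i ≠ j → jacobian f s i j = 0) →
        0 < globalIMAContrast f μ) := by
  have key := fun s => local_key (jacobian f s) (hJ s) (htri s)
  -- continuity of the Jacobian entries
  have hcf : Continuous (fun s => fderiv ℝ f s) := hf.continuous_fderiv one_ne_zero
  have hent : ∀ i j : Fin n, Continuous fun s => jacobian f s i j := by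
    intro i j
    exact (continuous_apply i).comp (hcf.clm_apply continuous_const)
  have hJc : Continuous fun s => jacobian f s :=
    continuous_matrix fun i j => hent i j
  have hcol : ∀ i : Fin n, Continuous fun s => columnNorm (jacobian f s) i := by
    intro i
    exact Real.continuous_sqrt.comp (continuous_finset_sum _ fun j _ => (hent j i).pow 2)
  have hmeas : Measurable fun s => localIMAContrast (jacobian f s) := by
    apply Measurable.sub
    · exact Finset.measurable_sum _ fun i _ =>
        Real.measurable_log.comp (hcol i).measurable
    · exact Real.measurable_log.comp
        ((continuous_abs.comp hJc.matrix_det).measurable)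
  have h0 : globalIMAContrast f μ = 0 ↔
      ∀ᵐ s ∂μ, localIMAContrast (jacobian f s) = 0 := by
    rw [globalIMAContrast, lintegral_eq_zero_iff (hmeas.ennreal_ofReal)]
    constructor <;> intro h <;> filter_upwards [h] with s hs
    · have hle : localIMAContrast (jacobian f s) ≤ 0 := by
        have : ENNReal.ofReal (localIMAContrast (jacobian f s)) = 0 := hs
        exact ENNReal.ofReal_eq_zero.mp this
      exact le_antisymm hle (key s).1
    · simp [hs]
  have hiff : globalIMAContrast f μ = 0 ↔
      ∀ᵐ s ∂μ, ∀ i j : Fin n, i ≠ j → jacobian f s i j = 0 := by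
    rw [h0]
    exact Filter.eventually_congr (Filter.Eventually.of_forall fun s => (key s).2)
  exact ⟨hiff, fun h => pos_iff_ne_zero.2 fun h0 => h (hiff.mp h0)⟩
end

section
/- Let n ≥ 2 and let p₁, …, p_n : ℝ → (0, ∞) be smooth strictly positive probability densities; let μ_s be the product probability measure on ℝⁿ with density p_s(s) = ∏_{i=1}^n p_i(s_i). Let F_i(t) = ∫_{−∞}^{t} p_i be the CDF of p_i, let Φ be the CDF of the standard Gaussian distribution N(0,1), and define σ : ℝⁿ → ℝⁿ by σ(s)_i = Φ⁻¹(F_i(s_i)). For an orthogonal matrix R ∈ O(n), define the rotated-Gaussian measure-preserving automorphism a^R := σ⁻¹ ∘ (s ↦ R·s) ∘ σ. Let f : ℝⁿ → ℝⁿ be a smooth conformal map (so that C_IMA(f, μ_s) = 0). Suppose there exists an index i such that (a) the probability measure on ℝ with density p_i is not a Gaussian distribution N(m, v) for any m ∈ ℝ and v > 0, and (b) the i-th row of R has at least two nonzero entries (equivalently, Rᵀ·eᵢ is not of the form ±e_j for any standard basis vector e_j). Then C_IMA(f ∘ a^R, μ_s) > 0. -/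
open MeasureTheory
open scoped BigOperators ENNReal

open Matrix

/-- The cumulative distribution function `t ↦ ∫_{−∞}^t q` of a density `q` on `ℝ`. -/
noncomputable def cdfOfDensity (q : ℝ → ℝ) (t : ℝ) : ℝ :=
  ∫ x in Set.Iic t, q x

/-- The CDF `Φ` of the standard Gaussian distribution `N(0,1)`. -/
noncomputable def stdGaussianCDF (t : ℝ) : ℝ :=
  ∫ x in Set.Iic t, ProbabilityTheory.gaussianPDFReal 0 1 x

/-- The elementwise Gaussianisation map `σ(s)_i = Φ⁻¹(F_i(s_i))` associated with densities
`p i` (with `F_i` the CDF of `p i` and `Φ` the standard Gaussian CDF). -/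
noncomputable def gaussianise {n : ℕ} (p : Fin n → ℝ → ℝ) (s : Fin n → ℝ) : Fin n → ℝ :=
  fun i => Function.invFun stdGaussianCDF (cdfOfDensity (p i) (s i))

/-- The "rotated-Gaussian" measure-preserving automorphism
`a^R = σ⁻¹ ∘ (s ↦ R·s) ∘ σ`, where `σ` is the Gaussianisation map of the densities `p i`. -/
noncomputable def rotatedGaussianMPA {n : ℕ} (p : Fin n → ℝ → ℝ)
    (R : Matrix (Fin n) (Fin n) ℝ) (s : Fin n → ℝ) : Fin n → ℝ :=
  fun i => Function.invFun (cdfOfDensity (p i))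
    (stdGaussianCDF (R.mulVec (gaussianise p s) i))


section Aux
open MeasureTheory Set Filter Function
open scoped Topology

section OneDim

variable {q : ℝ → ℝ}

lemma integrable_of_pos_integral_one (hq : Continuous q) (hqpos : ∀ x, 0 < q x)
    (hqint : ∫ x, q x = 1) : Integrable q := by
  by_contra h
  rw [integral_undef h] at hqint
  norm_num at hqint

lemma cdf_hasDerivAt (hq : Continuous q) (hqpos : ∀ x, 0 < q x) (hqint : ∫ x, q x = 1)
    (t : ℝ) : HasDerivAt (cdfOfDensity q) (q t) t := by
  have hInt : Integrable q := integrable_of_pos_integral_one hq hqpos hqint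
  have key : ∀ u : ℝ, cdfOfDensity q u = cdfOfDensity q 0 + ∫ x in (0:ℝ)..u, q x := by
    intro u
    have := intervalIntegral.integral_Iic_sub_Iic (μ := volume) (f := q)
      (hInt.integrableOn) (hInt.integrableOn) (a := 0) (b := u)
    unfold cdfOfDensity
    linarith [this]
  have h1 : HasDerivAt (fun u => cdfOfDensity q 0 + ∫ x in (0:ℝ)..u, q x) (q t) t := by
    refine HasDerivAt.const_add _ ?_
    exact intervalIntegral.integral_hasDerivAt_right
      (hInt.intervalIntegrable) (hq.stronglyMeasurableAtFilter _ _) hq.continuousAt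
  exact h1.congr_of_eventuallyEq (Filter.Eventually.of_forall key)

lemma cdf_strictMono (hq : Continuous q) (hqpos : ∀ x, 0 < q x) (hqint : ∫ x, q x = 1) :
    StrictMono (cdfOfDensity q) :=
  strictMono_of_deriv_pos fun t => by
    rw [(cdf_hasDerivAt hq hqpos hqint t).deriv]; exact hqpos t

lemma cdf_continuous (hq : Continuous q) (hqpos : ∀ x, 0 < q x) (hqint : ∫ x, q x = 1) :
    Continuous (cdfOfDensity q) := by
  have : Differentiable ℝ (cdfOfDensity q) :=
    fun t => (cdf_hasDerivAt hq hqpos hqint t).differentiableAt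
  exact this.continuous

lemma cdf_pos (hq : Continuous q) (hqpos : ∀ x, 0 < q x) (hqint : ∫ x, q x = 1)
    (t : ℝ) : 0 < cdfOfDensity q t := by
  have hInt : Integrable q := integrable_of_pos_integral_one hq hqpos hqint
  refine (setIntegral_pos_iff_support_of_nonneg_ae ?_ hInt.integrableOn).2 ?_
  · exact Filter.Eventually.of_forall fun x => (hqpos x).le
  · have : Function.support q = Set.univ := by
      ext x; simp [Function.support, (hqpos x).ne']
    rw [this, Set.univ_inter]
    simp [Real.volume_Iic]

lemma cdf_lt_one (hq : Continuous q) (hqpos : ∀ x, 0 < q x) (hqint : ∫ x, q x = 1)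
    (t : ℝ) : cdfOfDensity q t < 1 := by
  have hInt : Integrable q := integrable_of_pos_integral_one hq hqpos hqint
  have hsplit := intervalIntegral.integral_Iic_add_Ioi (b := t) (f := q) (μ := volume)
    hInt.integrableOn hInt.integrableOn
  have hpos : 0 < ∫ x in Set.Ioi t, q x := by
    refine (setIntegral_pos_iff_support_of_nonneg_ae ?_ hInt.integrableOn).2 ?_
    · exact Filter.Eventually.of_forall fun x => (hqpos x).le
    · have : Function.support q = Set.univ := by
        ext x; simp [Function.support, (hqpos x).ne']
      rw [this, Set.univ_inter]
      simp [Real.volume_Ioi]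
  have : cdfOfDensity q t + ∫ x in Set.Ioi t, q x = 1 := by
    rw [← hqint]; exact hsplit
  unfold cdfOfDensity; linarith

lemma cdf_tendsto_atTop (hq : Continuous q) (hqpos : ∀ x, 0 < q x) (hqint : ∫ x, q x = 1) :
    Tendsto (cdfOfDensity q) atTop (𝓝 1) := by
  have hInt : Integrable q := integrable_of_pos_integral_one hq hqpos hqint
  have := (MeasureTheory.aecover_Iic (μ := volume) (l := atTop)
    (b := fun t : ℝ => t) tendsto_id).integral_tendsto_of_countably_generated hInt
  rw [hqint] at this; exact this

lemma cdf_tendsto_atBot (hq : Continuous q) (hqpos : ∀ x, 0 < q x) (hqint : ∫ x, q x = 1) :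
    Tendsto (cdfOfDensity q) atBot (𝓝 0) := by
  have hInt : Integrable q := integrable_of_pos_integral_one hq hqpos hqint
  have h := intervalIntegral_tendsto_integral_Iic (μ := volume) (l := atBot)
    (b := 0) hInt.integrableOn (tendsto_id (x := atBot))
  have key : ∀ a : ℝ, cdfOfDensity q a = cdfOfDensity q 0 - ∫ x in a..(0:ℝ), q x := by
    intro a
    have := intervalIntegral.integral_Iic_sub_Iic (μ := volume) (f := q)
      (hInt.integrableOn) (hInt.integrableOn) (a := a) (b := 0)
    unfold cdfOfDensity; linarith
  have : Tendsto (fun a : ℝ => cdfOfDensity q 0 - ∫ x in a..(0:ℝ), q x) atBot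
      (𝓝 (cdfOfDensity q 0 - cdfOfDensity q 0)) := (tendsto_const_nhds.sub h)
  simp only [sub_self] at this
  exact Tendsto.congr (fun a => (key a).symm) this

lemma cdf_mem_Ioo (hq : Continuous q) (hqpos : ∀ x, 0 < q x) (hqint : ∫ x, q x = 1)
    (t : ℝ) : cdfOfDensity q t ∈ Set.Ioo (0:ℝ) 1 :=
  ⟨cdf_pos hq hqpos hqint t, cdf_lt_one hq hqpos hqint t⟩

lemma cdf_surj (hq : Continuous q) (hqpos : ∀ x, 0 < q x) (hqint : ∫ x, q x = 1)
    {u : ℝ} (hu : u ∈ Set.Ioo (0:ℝ) 1) : ∃ t, cdfOfDensity q t = u := by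
  obtain ⟨a, ha⟩ : ∃ a, cdfOfDensity q a < u := by
    have := (cdf_tendsto_atBot hq hqpos hqint).eventually_lt_const hu.1
    exact this.exists
  obtain ⟨b, hb⟩ : ∃ b, u < cdfOfDensity q b := by
    have := (cdf_tendsto_atTop hq hqpos hqint).eventually_const_lt hu.2
    exact this.exists
  have hab : a ≤ b := by
    by_contra hcon
    push_neg at hcon
    exact absurd ((cdf_strictMono hq hqpos hqint).monotone hcon.le)
      (by linarith)
  have := intermediate_value_Icc hab (cdf_continuous hq hqpos hqint).continuousOn
  obtain ⟨t, _, ht⟩ := this ⟨ha.le, hb.le⟩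
  exact ⟨t, ht⟩

lemma cdf_invFun_eq (hq : Continuous q) (hqpos : ∀ x, 0 < q x) (hqint : ∫ x, q x = 1)
    {u : ℝ} (hu : u ∈ Set.Ioo (0:ℝ) 1) :
    cdfOfDensity q (Function.invFun (cdfOfDensity q) u) = u :=
  Function.invFun_eq (cdf_surj hq hqpos hqint hu)

lemma invFun_cdf_self (hq : Continuous q) (hqpos : ∀ x, 0 < q x) (hqint : ∫ x, q x = 1)
    (t : ℝ) : Function.invFun (cdfOfDensity q) (cdfOfDensity q t) = t :=
  Function.leftInverse_invFun (cdf_strictMono hq hqpos hqint).injective t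

lemma invFun_cdf_continuousOn (hq : Continuous q) (hqpos : ∀ x, 0 < q x)
    (hqint : ∫ x, q x = 1) :
    ContinuousOn (Function.invFun (cdfOfDensity q)) (Set.Ioo (0:ℝ) 1) := by
  set F := cdfOfDensity q
  have hmono : StrictMono F := cdf_strictMono hq hqpos hqint
  have hmem : ∀ t, F t ∈ Set.Ioo (0:ℝ) 1 := cdf_mem_Ioo hq hqpos hqint
  let e : ℝ ≃o Set.Ioo (0:ℝ) 1 :=
    StrictMono.orderIsoOfSurjective (fun t => ⟨F t, hmem t⟩)
      (fun a b hab => by simpa using hmono hab)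
      (fun u => by
        obtain ⟨t, ht⟩ := cdf_surj hq hqpos hqint u.2
        exact ⟨t, Subtype.ext ht⟩)
  have heq : Set.restrict (Set.Ioo (0:ℝ) 1) (Function.invFun F) = ⇑e.symm := by
    funext x
    apply hmono.injective
    have h1 : F (Function.invFun F x.1) = x.1 := cdf_invFun_eq hq hqpos hqint x.2
    have h2 : F (e.symm x) = x.1 := by
      have := e.apply_symm_apply x
      exact congrArg Subtype.val this
    rw [h2]; exact h1
  rw [continuousOn_iff_continuous_restrict]; change Continuous (Set.restrict (Set.Ioo (0:ℝ) 1) (Function.invFun F)); rw [heq]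
  exact OrderIso.continuous e.symm

lemma invFun_cdf_hasDerivAt (hq : Continuous q) (hqpos : ∀ x, 0 < q x)
    (hqint : ∫ x, q x = 1) {u : ℝ} (hu : u ∈ Set.Ioo (0:ℝ) 1) :
    HasDerivAt (Function.invFun (cdfOfDensity q))
      (q (Function.invFun (cdfOfDensity q) u))⁻¹ u := by
  refine HasDerivAt.of_local_left_inverse
    ((invFun_cdf_continuousOn hq hqpos hqint).continuousAt (isOpen_Ioo.mem_nhds hu))
    (cdf_hasDerivAt hq hqpos hqint _) (hqpos _).ne' ?_
  filter_upwards [isOpen_Ioo.mem_nhds hu] with y hy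
  exact cdf_invFun_eq hq hqpos hqint hy

end OneDim

section Gaussian
open ProbabilityTheory

lemma stdGaussianPDF_continuous : Continuous (gaussianPDFReal 0 1) := by
  rw [gaussianPDFReal_def]
  fun_prop

lemma stdGaussianPDF_pos (x : ℝ) : 0 < gaussianPDFReal 0 1 x :=
  gaussianPDFReal_pos 0 1 x one_ne_zero

lemma stdGaussianPDF_integral : ∫ x, gaussianPDFReal 0 1 x = 1 :=
  integral_gaussianPDFReal_eq_one 0 one_ne_zero

lemma stdGaussianCDF_eq : stdGaussianCDF = cdfOfDensity (gaussianPDFReal 0 1) := rfl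

end Gaussian

section Maps
open ProbabilityTheory

/-- The scalar gaussianisation map associated with a density. -/
noncomputable def gMap (q : ℝ → ℝ) : ℝ → ℝ :=
  fun t => Function.invFun stdGaussianCDF (cdfOfDensity q t)

/-- The scalar inverse gaussianisation map. -/
noncomputable def hMap (q : ℝ → ℝ) : ℝ → ℝ :=
  fun u => Function.invFun (cdfOfDensity q) (stdGaussianCDF u)

variable {q : ℝ → ℝ} (hq : Continuous q) (hqpos : ∀ x, 0 < q x) (hqint : ∫ x, q x = 1)

lemma stdCDF_mem_Ioo (u : ℝ) : stdGaussianCDF u ∈ Set.Ioo (0:ℝ) 1 := by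
  rw [stdGaussianCDF_eq]
  exact cdf_mem_Ioo stdGaussianPDF_continuous stdGaussianPDF_pos stdGaussianPDF_integral u

include hq hqpos hqint

lemma gMap_hasDerivAt (t : ℝ) :
    HasDerivAt (gMap q) ((gaussianPDFReal 0 1 (gMap q t))⁻¹ * q t) t := by
  have h1 : HasDerivAt (Function.invFun stdGaussianCDF)
      (gaussianPDFReal 0 1 (gMap q t))⁻¹ (cdfOfDensity q t) := by
    rw [stdGaussianCDF_eq]
    exact invFun_cdf_hasDerivAt stdGaussianPDF_continuous stdGaussianPDF_pos
      stdGaussianPDF_integral (cdf_mem_Ioo hq hqpos hqint t)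
  exact h1.comp t (cdf_hasDerivAt hq hqpos hqint t)

omit hq hqint in
lemma gMap_deriv_pos (t : ℝ) : 0 < (gaussianPDFReal 0 1 (gMap q t))⁻¹ * q t :=
  mul_pos (inv_pos.2 (stdGaussianPDF_pos _)) (hqpos t)

lemma hMap_hasDerivAt (u : ℝ) :
    HasDerivAt (hMap q) ((q (hMap q u))⁻¹ * gaussianPDFReal 0 1 u) u := by
  have h1 : HasDerivAt (Function.invFun (cdfOfDensity q))
      (q (hMap q u))⁻¹ (stdGaussianCDF u) :=
    invFun_cdf_hasDerivAt hq hqpos hqint (stdCDF_mem_Ioo u)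
  have h2 : HasDerivAt stdGaussianCDF (gaussianPDFReal 0 1 u) u := by
    rw [stdGaussianCDF_eq]
    exact cdf_hasDerivAt stdGaussianPDF_continuous stdGaussianPDF_pos stdGaussianPDF_integral u
  exact h1.comp u h2

omit hq hqint in
lemma hMap_deriv_pos (u : ℝ) : 0 < (q (hMap q u))⁻¹ * gaussianPDFReal 0 1 u :=
  mul_pos (inv_pos.2 (hqpos _)) (stdGaussianPDF_pos _)

lemma gMap_surjective : Function.Surjective (gMap q) := by
  intro z
  refine ⟨Function.invFun (cdfOfDensity q) (stdGaussianCDF z), ?_⟩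
  unfold gMap
  rw [cdf_invFun_eq hq hqpos hqint (stdCDF_mem_Ioo z), stdGaussianCDF_eq,
    invFun_cdf_self stdGaussianPDF_continuous stdGaussianPDF_pos stdGaussianPDF_integral]

lemma cdf_hMap (u : ℝ) : cdfOfDensity q (hMap q u) = stdGaussianCDF u :=
  cdf_invFun_eq hq hqpos hqint (stdCDF_mem_Ioo u)

end Maps

section GaussId
open ProbabilityTheory

variable {q : ℝ → ℝ} (hq : Continuous q) (hqpos : ∀ x, 0 < q x) (hqint : ∫ x, q x = 1)

include hq hqpos hqint

lemma withDensity_eq_gaussian_of_hMap_deriv_const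
    {c : ℝ} (hc : ∀ u, (q (hMap q u))⁻¹ * gaussianPDFReal 0 1 u = c) :
    ∃ (m : ℝ) (v : NNReal), 0 < v ∧
      volume.withDensity (fun x => ENNReal.ofReal (q x)) = gaussianReal m v := by
  have hcpos : 0 < c := hc 0 ▸ hMap_deriv_pos hqpos 0
  set b := hMap q 0 with hb
  -- hMap is affine
  have hlin : ∀ u, hMap q u = c * u + b := by
    have hdiff : Differentiable ℝ (fun u => hMap q u - c * u) := fun u =>
      ((hMap_hasDerivAt hq hqpos hqint u).sub ((hasDerivAt_id u).const_mul c)).differentiableAt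
    have hderiv : ∀ u, deriv (fun u => hMap q u - c * u) u = 0 := by
      intro u
      have H : HasDerivAt (fun u => hMap q u - c * u) 0 u := by
        have := (hMap_hasDerivAt hq hqpos hqint u).sub ((hasDerivAt_id u).const_mul c)
        exact this.congr_deriv (by simp [hc u])
      exact H.deriv
    intro u
    have := is_const_of_deriv_eq_zero hdiff hderiv u 0
    simp only [mul_zero, sub_zero] at this
    linarith [this]
  have hcdf : ∀ u, cdfOfDensity q (c * u + b) = stdGaussianCDF u := by
    intro u
    rw [← hlin u]
    exact cdf_hMap hq hqpos hqint u
  have hd : ∀ u, q (c * u + b) * c = gaussianPDFReal 0 1 u := by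
    intro u
    have h1 : HasDerivAt (fun u => cdfOfDensity q (c * u + b)) (q (c * u + b) * c) u := by
      have := (cdf_hasDerivAt hq hqpos hqint (c * u + b)).comp u
        (((hasDerivAt_id u).const_mul c).add_const b)
      exact this.congr_deriv (by simp)
    have h1' : HasDerivAt stdGaussianCDF (q (c * u + b) * c) u := by
      exact h1.congr_of_eventuallyEq (Filter.Eventually.of_forall fun y => (hcdf y).symm)
    have h2 : HasDerivAt stdGaussianCDF (gaussianPDFReal 0 1 u) u := by
      rw [stdGaussianCDF_eq]
      exact cdf_hasDerivAt stdGaussianPDF_continuous stdGaussianPDF_pos stdGaussianPDF_integral u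
    exact h1'.unique h2
  have hpdf : ∀ x, q x = gaussianPDFReal b (c^2).toNNReal x := by
    intro x
    have := hd ((x - b) / c)
    have hx : c * ((x - b) / c) + b = x := by field_simp; ring
    rw [hx] at this
    have hqx : q x = gaussianPDFReal 0 1 ((x - b) / c) / c := by
      field_simp at this ⊢
      linarith [this]
    rw [hqx, gaussianPDFReal_def, gaussianPDFReal_def]
    simp only [Real.coe_toNNReal _ (sq_nonneg c), NNReal.coe_one]
    have hsqrt : Real.sqrt (2 * Real.pi * c^2) = Real.sqrt (2 * Real.pi) * c := by
      rw [Real.sqrt_mul (by positivity), Real.sqrt_sq hcpos.le]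
    rw [hsqrt]
    have hexp : -((x - b) / c - 0)^2 / (2 * 1) = -(x - b)^2 / (2 * c^2) := by
      rw [sub_zero, div_pow]
      ring
    rw [mul_one, hexp, mul_inv]
    have h2 : Real.sqrt (2 * Real.pi) ≠ 0 := by positivity
    have hc0 : c ≠ 0 := ne_of_gt hcpos
    field_simp
  have hvpos : (0:NNReal) < (c^2).toNNReal := by
    rw [← NNReal.coe_pos]
    simp only [Real.coe_toNNReal _ (sq_nonneg c)]
    positivity
  refine ⟨b, (c^2).toNNReal, hvpos, ?_⟩
  rw [gaussianReal_of_var_ne_zero b (ne_of_gt hvpos)]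
  congr 1
  funext x
  rw [hpdf x]
  rfl

end GaussId


section MatrixLemmas

variable {n : ℕ}

lemma columnNorm_pos_of_det_ne_zero {W : Matrix (Fin n) (Fin n) ℝ} (hW : W.det ≠ 0)
    (j : Fin n) : 0 < columnNorm W j := by
  apply Real.sqrt_pos.2
  by_contra h
  push_neg at h
  have hsum : ∑ m, (W m j)^2 = 0 := le_antisymm h (Finset.sum_nonneg fun m _ => sq_nonneg _)
  have hz : ∀ k, W k j = 0 := by
    intro k
    have := (Finset.sum_eq_zero_iff_of_nonneg (fun m _ => sq_nonneg (W m j))).1 hsum k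
      (Finset.mem_univ k)
    nlinarith [this, sq_nonneg (W k j), sq_abs (W k j), abs_nonneg (W k j)]
  exact hW (Matrix.det_eq_zero_of_column_eq_zero j hz)

lemma jacobian_comp {f a : (Fin n → ℝ) → (Fin n → ℝ)} {s : Fin n → ℝ}
    (hf : DifferentiableAt ℝ f (a s)) (ha : DifferentiableAt ℝ a s) :
    jacobian (f ∘ a) s = jacobian f (a s) * jacobian a s := by
  ext i j
  have hcomp := fderiv_comp s hf ha
  unfold jacobian
  rw [Matrix.mul_apply]
  simp only [Matrix.of_apply]
  rw [hcomp]
  simp only [ContinuousLinearMap.coe_comp', Function.comp_apply]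
  set v : Fin n → ℝ := fderiv ℝ a s (Pi.single j 1) with hv
  have hvsum : v = ∑ k, v k • (Pi.single k 1 : Fin n → ℝ) := by
    funext x
    simp [Finset.sum_apply, Pi.single_apply, Finset.sum_ite_eq']
  calc fderiv ℝ f (a s) v i
      = fderiv ℝ f (a s) (∑ k, v k • (Pi.single k 1 : Fin n → ℝ)) i := by rw [← hvsum]
    _ = ∑ k, fderiv ℝ f (a s) (Pi.single k 1) i * v k := by
        rw [map_sum, Finset.sum_apply]
        refine Finset.sum_congr rfl fun k _ => ?_
        rw [(fderiv ℝ f (a s)).map_smul]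
        simp [mul_comm]

lemma det_abs_one_of_orth {O : Matrix (Fin n) (Fin n) ℝ} (hO : Oᵀ * O = 1) :
    |O.det| = 1 := by
  have h1 : O.det * O.det = 1 := by
    have := congrArg Matrix.det hO
    rwa [Matrix.det_mul, Matrix.det_transpose, Matrix.det_one] at this
  nlinarith [abs_nonneg O.det, sq_abs O.det]

lemma columnNorm_smul_orth_mul {O M : Matrix (Fin n) (Fin n) ℝ} (hO : Oᵀ * O = 1)
    (l : ℝ) (j : Fin n) :
    columnNorm ((l • O) * M) j = |l| * columnNorm M j := by
  unfold columnNorm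
  have key : ∑ k, (((l • O) * M) k j)^2 = l^2 * ∑ k, (M k j)^2 := by
    have h1 : ∑ k, (((l • O) * M) k j)^2 = (((l • O) * M)ᵀ * ((l • O) * M)) j j := by
      rw [Matrix.mul_apply]
      exact Finset.sum_congr rfl fun k _ => by simp [Matrix.transpose_apply, sq]
    have h2 : ∑ k, (M k j)^2 = (Mᵀ * M) j j := by
      rw [Matrix.mul_apply]
      exact Finset.sum_congr rfl fun k _ => by simp [Matrix.transpose_apply, sq]
    rw [h1, h2]
    have : ((l • O) * M)ᵀ * ((l • O) * M) = (l^2) • (Mᵀ * M) := by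
      have h3 : (O * M)ᵀ * (O * M) = Mᵀ * M := by
        rw [Matrix.transpose_mul, Matrix.mul_assoc, ← Matrix.mul_assoc Oᵀ O M, hO,
          Matrix.one_mul]
      rw [Matrix.smul_mul, Matrix.transpose_smul, Matrix.smul_mul, Matrix.mul_smul,
        smul_smul, ← sq, h3]
    rw [this, Matrix.smul_apply, smul_eq_mul]
  rw [key, Real.sqrt_mul (sq_nonneg l), Real.sqrt_sq_eq_abs]

lemma localIMAContrast_smul_orth_mul {O M : Matrix (Fin n) (Fin n) ℝ} (hO : Oᵀ * O = 1)
    {l : ℝ} (hl : l ≠ 0) (hM : M.det ≠ 0) :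
    localIMAContrast ((l • O) * M) = localIMAContrast M := by
  unfold localIMAContrast
  have hdet : |((l • O) * M).det| = |l|^n * |M.det| := by
    rw [Matrix.det_mul, Matrix.det_smul, abs_mul, abs_mul, abs_pow]
    rw [det_abs_one_of_orth hO]
    simp [Fintype.card_fin]
  have hsum : ∑ j, Real.log (columnNorm ((l • O) * M) j)
      = (n : ℝ) * Real.log |l| + ∑ j, Real.log (columnNorm M j) := by
    have : ∀ j : Fin n, Real.log (columnNorm ((l • O) * M) j)
        = Real.log |l| + Real.log (columnNorm M j) := by
      intro j
      rw [columnNorm_smul_orth_mul hO]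
      exact Real.log_mul (abs_ne_zero.2 hl) (columnNorm_pos_of_det_ne_zero hM j).ne'
    rw [Finset.sum_congr rfl fun j _ => this j, Finset.sum_add_distrib]
    simp [Finset.card_univ, Fintype.card_fin]
  rw [hsum, hdet, Real.log_mul (by positivity) (abs_ne_zero.2 hM), Real.log_pow]
  push_cast
  ring

end MatrixLemmas

section DRE

variable {n : ℕ} {D E : Fin n → ℝ} {R : Matrix (Fin n) (Fin n) ℝ}

lemma sum_sq_col (hR : Rᵀ * R = 1) (j : Fin n) : ∑ m, (R m j)^2 = 1 := by
  have := congrFun (congrFun hR j) j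
  rw [Matrix.mul_apply] at this
  simp only [Matrix.transpose_apply] at this
  rw [Matrix.one_apply_eq] at this
  rw [← this]
  exact Finset.sum_congr rfl fun m _ => (sq (R m j)).symm ▸ rfl

lemma sum_sq_row (hR : Rᵀ * R = 1) (m : Fin n) : ∑ j, (R m j)^2 = 1 := by
  have hR' : R * Rᵀ = 1 := mul_eq_one_comm.1 hR
  have := congrFun (congrFun hR' m) m
  rw [Matrix.mul_apply] at this
  simp only [Matrix.transpose_apply] at this
  rw [Matrix.one_apply_eq] at this
  rw [← this]
  exact Finset.sum_congr rfl fun j _ => (sq (R m j)).symm ▸ rfl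

lemma S_pos (hD : ∀ m, 0 < D m) (hR : Rᵀ * R = 1) (j : Fin n) :
    0 < ∑ m, (D m)^2 * (R m j)^2 := by
  obtain ⟨m, hm⟩ : ∃ m, R m j ≠ 0 := by
    by_contra h
    push_neg at h
    have := sum_sq_col hR j
    rw [Finset.sum_eq_zero (fun m _ => by rw [h m]; ring)] at this
    norm_num at this
  refine Finset.sum_pos' (fun k _ => by positivity) ⟨m, Finset.mem_univ m, ?_⟩
  have := hD m
  positivity

lemma dre_det (hR : Rᵀ * R = 1) :
    (Matrix.of fun i j => D i * R i j * E j).det = (∏ m, D m) * R.det * (∏ j, E j) := by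
  have heq : (Matrix.of fun i j => D i * R i j * E j)
      = Matrix.diagonal D * R * Matrix.diagonal E := by
    ext i j
    simp only [Matrix.of_apply, Matrix.mul_diagonal, Matrix.diagonal_mul]
  rw [heq, Matrix.det_mul, Matrix.det_mul, Matrix.det_diagonal, Matrix.det_diagonal]

lemma dre_det_ne_zero (hD : ∀ m, 0 < D m) (hE : ∀ j, 0 < E j) (hR : Rᵀ * R = 1) :
    (Matrix.of fun i j => D i * R i j * E j).det ≠ 0 := by
  rw [dre_det hR]
  have hRdet : R.det ≠ 0 := by
    intro h
    have := det_abs_one_of_orth hR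
    rw [h] at this
    norm_num at this
  have h1 : (∏ m, D m) ≠ 0 := (Finset.prod_pos (fun m _ => hD m)).ne'
  have h2 : (∏ j, E j) ≠ 0 := (Finset.prod_pos (fun j _ => hE j)).ne'
  exact mul_ne_zero (mul_ne_zero h1 hRdet) h2

lemma columnNorm_dre (hE : ∀ j, 0 < E j) (j : Fin n) :
    columnNorm (Matrix.of fun i j => D i * R i j * E j) j
      = E j * Real.sqrt (∑ m, (D m)^2 * (R m j)^2) := by
  unfold columnNorm
  have : ∑ m, ((Matrix.of fun i j => D i * R i j * E j) m j)^2
      = (E j)^2 * ∑ m, (D m)^2 * (R m j)^2 := by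
    rw [Finset.mul_sum]
    exact Finset.sum_congr rfl fun m _ => by simp only [Matrix.of_apply]; ring
  rw [this, Real.sqrt_mul (sq_nonneg _), Real.sqrt_sq (hE j).le]

lemma contrast_dre (hD : ∀ m, 0 < D m) (hE : ∀ j, 0 < E j) (hR : Rᵀ * R = 1) :
    localIMAContrast (Matrix.of fun i j => D i * R i j * E j)
      = ∑ j, (Real.log (Real.sqrt (∑ m, (D m)^2 * (R m j)^2))
          - ∑ m, (R m j)^2 * Real.log (D m)) := by
  unfold localIMAContrast
  have h1 : ∀ j, Real.log (columnNorm (Matrix.of fun i j => D i * R i j * E j) j)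
      = Real.log (E j) + Real.log (Real.sqrt (∑ m, (D m)^2 * (R m j)^2)) := by
    intro j
    rw [columnNorm_dre hE j]
    exact Real.log_mul (hE j).ne' (Real.sqrt_pos.2 (S_pos hD hR j)).ne'
  have h2 : Real.log |(Matrix.of fun i j => D i * R i j * E j).det|
      = ∑ m, Real.log (D m) + ∑ j, Real.log (E j) := by
    rw [dre_det hR, abs_mul, abs_mul]
    rw [det_abs_one_of_orth hR, mul_one]
    rw [abs_of_pos (Finset.prod_pos fun m _ => hD m), abs_of_pos (Finset.prod_pos fun j _ => hE j)]
    rw [Real.log_mul (Finset.prod_pos fun m _ => hD m).ne'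
      (Finset.prod_pos fun j _ => hE j).ne']
    rw [Real.log_prod (fun m _ => (hD m).ne'), Real.log_prod (fun j _ => (hE j).ne')]
  have h3 : ∑ m, Real.log (D m) = ∑ j, ∑ m, (R m j)^2 * Real.log (D m) := by
    rw [Finset.sum_comm]
    refine Finset.sum_congr rfl fun m _ => ?_
    rw [← Finset.sum_mul, sum_sq_row hR m, one_mul]
  rw [Finset.sum_congr rfl fun j _ => h1 j, Finset.sum_add_distrib, h2, h3,
    Finset.sum_sub_distrib]
  ring

lemma jensen_term_nonneg (hD : ∀ m, 0 < D m) (hR : Rᵀ * R = 1) (j : Fin n) :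
    0 ≤ Real.log (Real.sqrt (∑ m, (D m)^2 * (R m j)^2)) - ∑ m, (R m j)^2 * Real.log (D m) := by
  have hconc := (strictConcaveOn_log_Ioi.concaveOn).le_map_sum
    (t := Finset.univ) (w := fun m => (R m j)^2) (p := fun m => (D m)^2)
    (fun m _ => sq_nonneg _) (sum_sq_col hR j) (fun m _ => by
      have := hD m; exact Set.mem_Ioi.2 (by positivity))
  simp only [smul_eq_mul] at hconc
  rw [Real.log_sqrt (Finset.sum_nonneg fun m _ => by positivity)]
  have hlog : ∀ m, (R m j)^2 * Real.log ((D m)^2) = 2 * ((R m j)^2 * Real.log (D m)) := by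
    intro m
    rw [sq (D m), Real.log_mul (hD m).ne' (hD m).ne']
    ring
  have hsum : ∑ m, (R m j)^2 * Real.log ((D m)^2)
      = 2 * ∑ m, (R m j)^2 * Real.log (D m) := by
    rw [Finset.mul_sum]
    exact Finset.sum_congr rfl fun m _ => hlog m
  have heq : ∑ m, (R m j)^2 * ((D m)^2) = ∑ m, (D m)^2 * (R m j)^2 :=
    Finset.sum_congr rfl fun m _ => mul_comm _ _
  rw [heq, hsum] at hconc
  linarith

lemma jensen_term_pos (hD : ∀ m, 0 < D m) (hR : Rᵀ * R = 1) {j a b : Fin n}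
    (hab : a ≠ b) (hRa : R a j ≠ 0) (hRb : R b j ≠ 0) (hDab : D a ≠ D b) :
    0 < Real.log (Real.sqrt (∑ m, (D m)^2 * (R m j)^2)) - ∑ m, (R m j)^2 * Real.log (D m) := by
  classical
  set t : Finset (Fin n) := Finset.univ.filter (fun m => R m j ≠ 0) with ht
  have hw0 : ∀ m ∈ Finset.univ \ t, (R m j)^2 = 0 := by
    intro m hm
    simp only [ht, Finset.mem_sdiff, Finset.mem_univ, Finset.mem_filter, true_and,
      not_not] at hm
    rw [hm]; ring
  have hsubset : t ⊆ Finset.univ := Finset.subset_univ t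
  have hsum_eq : ∀ (x : Fin n → ℝ), ∑ m ∈ t, (R m j)^2 * x m = ∑ m, (R m j)^2 * x m := by
    intro x
    refine Finset.sum_subset hsubset ?_
    intro m _ hm
    simp only [ht, Finset.mem_filter, Finset.mem_univ, true_and, not_not] at hm
    rw [hm]; ring
  have hw1 : ∑ m ∈ t, (R m j)^2 = 1 := by
    have := hsum_eq (fun _ => 1)
    simp only [mul_one] at this
    rw [this]
    exact sum_sq_col hR j
  have hjensen := strictConcaveOn_log_Ioi.lt_map_sum (t := t)
    (w := fun m => (R m j)^2) (p := fun m => (D m)^2)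
    (fun m hm => by
      simp only [ht, Finset.mem_filter] at hm
      exact (sq_pos_of_ne_zero hm.2))
    hw1
    (fun m _ => by have := hD m; exact Set.mem_Ioi.2 (by positivity))
    ⟨a, by simp [ht, hRa], b, by simp [ht, hRb], by
      intro h
      have ha := hD a; have hb := hD b
      have h1 : D a ≤ D b := by nlinarith
      have h2 : D b ≤ D a := by nlinarith
      exact hDab (le_antisymm h1 h2)⟩
  simp only [smul_eq_mul] at hjensen
  have e1 : ∑ m ∈ t, (R m j)^2 * ((D m)^2) = ∑ m, (D m)^2 * (R m j)^2 := by
    rw [hsum_eq (fun m => (D m)^2)]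
    exact Finset.sum_congr rfl fun m _ => mul_comm _ _
  have e2 : ∑ m ∈ t, (R m j)^2 * Real.log ((D m)^2)
      = 2 * ∑ m, (R m j)^2 * Real.log (D m) := by
    rw [hsum_eq (fun m => Real.log ((D m)^2))]
    rw [Finset.mul_sum]
    refine Finset.sum_congr rfl fun m _ => ?_
    rw [sq (D m), Real.log_mul (hD m).ne' (hD m).ne']
    ring
  rw [e1, e2] at hjensen
  rw [Real.log_sqrt (Finset.sum_nonneg fun m _ => by positivity)]
  linarith

lemma contrast_dre_pos (hD : ∀ m, 0 < D m) (hE : ∀ j, 0 < E j) (hR : Rᵀ * R = 1)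
    {j a b : Fin n} (hab : a ≠ b) (hRa : R a j ≠ 0) (hRb : R b j ≠ 0) (hDab : D a ≠ D b) :
    0 < localIMAContrast (Matrix.of fun i j => D i * R i j * E j) := by
  rw [contrast_dre hD hE hR]
  refine Finset.sum_pos' (fun k _ => jensen_term_nonneg hD hR k) ⟨j, Finset.mem_univ j, ?_⟩
  exact jensen_term_pos hD hR hab hRa hRb hDab

end DRE

end Aux


section Vector
open MeasureTheory Set Filter Function
open scoped Topology

/-- The rotated gaussianised point. -/
noncomputable def yMap {n : ℕ} (p : Fin n → ℝ → ℝ) (R : Matrix (Fin n) (Fin n) ℝ)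
    (s : Fin n → ℝ) : Fin n → ℝ :=
  R.mulVec (fun k => gMap (p k) (s k))

/-- The derivative of the scalar inverse gaussianisation map. -/
noncomputable def dFun (q : ℝ → ℝ) (u : ℝ) : ℝ :=
  (q (hMap q u))⁻¹ * ProbabilityTheory.gaussianPDFReal 0 1 u

/-- The derivative of the scalar gaussianisation map. -/
noncomputable def eFun (q : ℝ → ℝ) (t : ℝ) : ℝ :=
  (ProbabilityTheory.gaussianPDFReal 0 1 (gMap q t))⁻¹ * q t

variable {n : ℕ} {p : Fin n → ℝ → ℝ} {R : Matrix (Fin n) (Fin n) ℝ}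

lemma yMap_apply (s : Fin n → ℝ) (i : Fin n) :
    yMap p R s i = ∑ k, R i k * gMap (p k) (s k) := rfl

lemma rmpa_eq (s : Fin n → ℝ) :
    rotatedGaussianMPA p R s = fun i => hMap (p i) (yMap p R s i) := rfl

variable (hpc : ∀ i, Continuous (p i)) (hppos : ∀ i x, 0 < p i x)
  (hpint : ∀ i, ∫ x, p i x = 1)

lemma dFun_pos (q : ℝ → ℝ) (hqpos : ∀ x, 0 < q x) (u : ℝ) : 0 < dFun q u :=
  hMap_deriv_pos hqpos u

lemma eFun_pos (q : ℝ → ℝ) (hqpos : ∀ x, 0 < q x) (t : ℝ) : 0 < eFun q t :=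
  gMap_deriv_pos hqpos t

include hpc hppos hpint

lemma hasFDerivAt_comp_yMap (s : Fin n → ℝ) (i : Fin n) :
    HasFDerivAt (fun s => yMap p R s i)
      (∑ k, (R i k * eFun (p k) (s k)) •
        ContinuousLinearMap.proj (R := ℝ) (φ := fun _ : Fin n => ℝ) k) s := by
  have hfun : (fun s : Fin n → ℝ => yMap p R s i)
      = fun s => ∑ k, R i k * gMap (p k) (s k) := by
    funext s; exact yMap_apply s i
  rw [hfun]
  refine HasFDerivAt.fun_sum fun k _ => ?_
  have hk : HasFDerivAt (fun s : Fin n → ℝ => gMap (p k) (s k))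
      (eFun (p k) (s k) • ContinuousLinearMap.proj (R := ℝ) (φ := fun _ : Fin n => ℝ) k) s :=
    (gMap_hasDerivAt (hpc k) (hppos k) (hpint k) (s k)).comp_hasFDerivAt (h₂ := gMap (p k))
      (f := fun s : Fin n → ℝ => s k) s
      (hasFDerivAt_apply k s)
  have := hk.const_mul (R i k)
  rwa [smul_smul] at this

lemma hasFDerivAt_rmpa (s : Fin n → ℝ) :
    HasFDerivAt (rotatedGaussianMPA p R)
      (ContinuousLinearMap.pi (fun i => dFun (p i) (yMap p R s i) •
        (∑ k, (R i k * eFun (p k) (s k)) •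
          ContinuousLinearMap.proj (R := ℝ) (φ := fun _ : Fin n => ℝ) k))) s := by
  have key : HasFDerivAt (fun (s : Fin n → ℝ) (i : Fin n) => hMap (p i) (yMap p R s i))
      (ContinuousLinearMap.pi (fun i => dFun (p i) (yMap p R s i) •
        (∑ k, (R i k * eFun (p k) (s k)) •
          ContinuousLinearMap.proj (R := ℝ) (φ := fun _ : Fin n => ℝ) k))) s := by
    refine hasFDerivAt_pi.2 fun i => ?_
    exact (hMap_hasDerivAt (hpc i) (hppos i) (hpint i) (yMap p R s i)).comp_hasFDerivAt
      (h₂ := hMap (p i)) (f := fun s => yMap p R s i) s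
      (hasFDerivAt_comp_yMap hpc hppos hpint s i)
  exact key

lemma differentiableAt_rmpa (s : Fin n → ℝ) :
    DifferentiableAt ℝ (rotatedGaussianMPA p R) s :=
  (hasFDerivAt_rmpa hpc hppos hpint s).differentiableAt

lemma jacobian_rmpa (s : Fin n → ℝ) :
    jacobian (rotatedGaussianMPA p R) s
      = Matrix.of fun i j => dFun (p i) (yMap p R s i) * R i j * eFun (p j) (s j) := by
  ext i j
  unfold jacobian
  simp only [Matrix.of_apply]
  rw [(hasFDerivAt_rmpa hpc hppos hpint s).fderiv]
  simp only [ContinuousLinearMap.pi_apply, ContinuousLinearMap.smul_apply,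
    ContinuousLinearMap.coe_sum', Finset.sum_apply, ContinuousLinearMap.proj_apply,
    Pi.single_apply, smul_eq_mul, mul_ite, mul_one, mul_zero]
  rw [Finset.sum_ite_eq' Finset.univ j (fun k => R i k * eFun (p k) (s k))]
  simp [mul_assoc]

omit hpc hppos hpint in
lemma continuous_gMap (q : ℝ → ℝ) (hq : Continuous q) (hqpos : ∀ x, 0 < q x)
    (hqint : ∫ x, q x = 1) : Continuous (gMap q) := by
  have h : Differentiable ℝ (gMap q) := fun t => (gMap_hasDerivAt hq hqpos hqint t).differentiableAt
  exact h.continuous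

omit hpc hppos hpint in
lemma continuous_hMap (q : ℝ → ℝ) (hq : Continuous q) (hqpos : ∀ x, 0 < q x)
    (hqint : ∫ x, q x = 1) : Continuous (hMap q) := by
  have h : Differentiable ℝ (hMap q) := fun t => (hMap_hasDerivAt hq hqpos hqint t).differentiableAt
  exact h.continuous

lemma continuous_yMap (i : Fin n) : Continuous (fun s => yMap p R s i) := by
  have : (fun s : Fin n → ℝ => yMap p R s i) = fun s => ∑ k, R i k * gMap (p k) (s k) := by
    funext s; exact yMap_apply s i
  rw [this]
  exact continuous_finset_sum _ fun k _ =>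
    (continuous_const.mul ((continuous_gMap (p k) (hpc k) (hppos k) (hpint k)).comp
      (continuous_apply k)))

lemma continuous_dFun_comp (m : Fin n) :
    Continuous (fun s => dFun (p m) (yMap p R s m)) := by
  have hd : Continuous (dFun (p m)) := by
    unfold dFun
    refine Continuous.mul (Continuous.inv₀ ?_ ?_) stdGaussianPDF_continuous
    · exact (hpc m).comp (continuous_hMap (p m) (hpc m) (hppos m) (hpint m))
    · exact fun u => (hppos m _).ne'
  exact hd.comp (continuous_yMap hpc hppos hpint m)

lemma yMap_surj (hR : Rᵀ * R = 1) (y : Fin n → ℝ) : ∃ s, yMap p R s = y := by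
  have hsurj : ∀ k, ∃ t, gMap (p k) t = (Rᵀ.mulVec y) k := fun k =>
    gMap_surjective (hpc k) (hppos k) (hpint k) ((Rᵀ.mulVec y) k)
  choose s hs using hsurj
  refine ⟨s, ?_⟩
  unfold yMap
  have : (fun k => gMap (p k) (s k)) = Rᵀ.mulVec y := funext hs
  rw [this, Matrix.mulVec_mulVec, mul_eq_one_comm.1 hR, Matrix.one_mulVec]

end Vector

/-- **Rotated-Gaussian measure-preserving automorphisms spoil the IMA contrast of
conformal maps.** Let `p₁, …, p_n` be smooth strictly positive densities with product
measure `μ_s`, let `R` be orthogonal, and let `f` be a smooth conformal map (so that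
`C_IMA(f, μ_s) = 0`). If there is an index `i` such that (a) the law with density `p i`
is not Gaussian and (b) the `i`-th row of `R` has at least two nonzero entries, then
`C_IMA(f ∘ a^R, μ_s) > 0`. -/
theorem globalIMAContrast_pos_of_rotatedGaussianMPA
    {n : ℕ} (hn : 2 ≤ n)
    (p : Fin n → ℝ → ℝ)
    (hpC : ∀ i, ContDiff ℝ (⊤ : ℕ∞) (p i))
    (hppos : ∀ i x, 0 < p i x)
    (hpint : ∀ i, ∫ x, p i x = 1)
    (R : Matrix (Fin n) (Fin n) ℝ) (hR : Rᵀ * R = 1)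
    (f : (Fin n → ℝ) → (Fin n → ℝ))
    (hfC : ContDiff ℝ 1 f)
    (hconf : ∀ s : Fin n → ℝ, ∃ (l : ℝ) (O : Matrix (Fin n) (Fin n) ℝ),
      l ≠ 0 ∧ Oᵀ * O = 1 ∧ jacobian f s = l • O)
    (i : Fin n)
    (hnonGauss : ∀ (m : ℝ) (v : NNReal), 0 < v →
      volume.withDensity (fun x => ENNReal.ofReal (p i x)) ≠
        ProbabilityTheory.gaussianReal m v)
    (hrow : ∃ j k : Fin n, j ≠ k ∧ R i j ≠ 0 ∧ R i k ≠ 0) :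
    0 < globalIMAContrast (f ∘ rotatedGaussianMPA p R)
        (volume.withDensity fun s : Fin n → ℝ => ENNReal.ofReal (∏ j, p j (s j))) := by
  classical
  set μ : Measure (Fin n → ℝ) :=
    volume.withDensity fun s : Fin n → ℝ => ENNReal.ofReal (∏ j, p j (s j)) with hμ
  set a := rotatedGaussianMPA p R with ha
  have hpc : ∀ i, Continuous (p i) := fun i => (hpC i).continuous
  have hDpos : ∀ (s : Fin n → ℝ) (m : Fin n), 0 < dFun (p m) (yMap p R s m) :=
    fun s m => dFun_pos _ (hppos m) _
  have hEpos : ∀ (s : Fin n → ℝ) (j : Fin n), 0 < eFun (p j) (s j) :=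
    fun s j => eFun_pos _ (hppos j) _
  have hjac : ∀ s, jacobian a s
      = Matrix.of fun i' j' => dFun (p i') (yMap p R s i') * R i' j' * eFun (p j') (s j') :=
    fun s => jacobian_rmpa hpc hppos hpint s
  -- the contrast of `f ∘ a` in closed form
  set ctil : (Fin n → ℝ) → ℝ := fun s => ∑ j',
      (Real.log (Real.sqrt (∑ m, (dFun (p m) (yMap p R s m))^2 * (R m j')^2))
        - ∑ m, (R m j')^2 * Real.log (dFun (p m) (yMap p R s m))) with hctil
  have hcontrast : ∀ s, localIMAContrast (jacobian (f ∘ a) s) = ctil s := by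
    intro s
    obtain ⟨l, O, hl, hO, hjf⟩ := hconf (a s)
    have hcomp := jacobian_comp (f := f) (a := a) (s := s)
      ((hfC.differentiable one_ne_zero) (a s)) (differentiableAt_rmpa hpc hppos hpint s)
    rw [hcomp, hjf, hjac s,
      localIMAContrast_smul_orth_mul hO hl (dre_det_ne_zero (hDpos s) (hEpos s) hR),
      contrast_dre (hDpos s) (hEpos s) hR]
  -- nonconstancy of dFun (p i)
  have hnc : ∃ t1 t2 : ℝ, dFun (p i) t1 ≠ dFun (p i) t2 := by
    by_contra hcon
    push_neg at hcon
    obtain ⟨m, v, hv, heq⟩ := withDensity_eq_gaussian_of_hMap_deriv_const (hpc i) (hppos i)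
      (hpint i) (c := dFun (p i) 0) (fun u => hcon u 0)
    exact hnonGauss m v hv heq
  obtain ⟨t1, t2, ht⟩ := hnc
  obtain ⟨j, k, hjk, hRij, hRik⟩ := hrow
  -- a second support element of column j
  obtain ⟨b, hbi, hRbj⟩ : ∃ b, b ≠ i ∧ R b j ≠ 0 := by
    by_contra hcon
    push_neg at hcon
    have hcol := sum_sq_col hR j
    have hcol' : ∑ m, (R m j)^2 = (R i j)^2 := by
      refine Finset.sum_eq_single i (fun c _ hci => ?_) (fun h => absurd (Finset.mem_univ i) h)
      rw [hcon c hci]; ring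
    have hrowsum := sum_sq_row hR i
    have hpair : (R i j)^2 + (R i k)^2 ≤ ∑ j', (R i j')^2 := by
      have := Finset.sum_le_sum_of_subset_of_nonneg (Finset.subset_univ {j, k})
        (fun x _ _ => sq_nonneg (R i x))
      rwa [Finset.sum_pair hjk] at this
    rw [hcol'] at hcol
    have := sq_pos_of_ne_zero hRik
    linarith
  -- choose the point
  obtain ⟨τ, hτ⟩ : ∃ τ, dFun (p i) τ ≠ dFun (p b) 0 := by
    by_cases hcase : dFun (p i) t1 = dFun (p b) 0
    · exact ⟨t2, fun h => ht (hcase.trans h.symm)⟩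
    · exact ⟨t1, hcase⟩
  set y0 : Fin n → ℝ := fun m => if m = i then τ else 0 with hy0
  obtain ⟨s₀, hs₀⟩ := yMap_surj hpc hppos hpint hR y0
  have hDi : dFun (p i) (yMap p R s₀ i) = dFun (p i) τ := by
    rw [hs₀]; simp [hy0]
  have hDb : dFun (p b) (yMap p R s₀ b) = dFun (p b) 0 := by
    rw [hs₀]; simp [hy0, hbi]
  have hDne : dFun (p i) (yMap p R s₀ i) ≠ dFun (p b) (yMap p R s₀ b) := by
    rw [hDi, hDb]; exact hτ
  -- positivity at s₀
  have hpos₀ : 0 < ctil s₀ := by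
    refine Finset.sum_pos' (fun c _ => jensen_term_nonneg (hDpos s₀) hR c)
      ⟨j, Finset.mem_univ j, ?_⟩
    exact jensen_term_pos (hDpos s₀) hR (fun h => hbi h.symm) hRij hRbj hDne
  -- continuity of the closed-form contrast
  have hccont : Continuous ctil := by
    refine continuous_finset_sum _ fun j' _ => Continuous.sub ?_ ?_
    · have hS : Continuous (fun s => ∑ m, (dFun (p m) (yMap p R s m))^2 * (R m j')^2) :=
        continuous_finset_sum _ fun m _ =>
          (((continuous_dFun_comp hpc hppos hpint m).pow 2).mul continuous_const)
      refine Continuous.log (hS.sqrt) fun s => ?_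
      exact (Real.sqrt_pos.2 (S_pos (hDpos s) hR j')).ne'
    · refine continuous_finset_sum _ fun m _ => Continuous.mul continuous_const ?_
      exact Continuous.log (continuous_dFun_comp hpc hppos hpint m)
        fun s => (hDpos s m).ne'
  -- a ball on which the contrast is at least ε
  set ε : ℝ := ctil s₀ / 2 with hε
  have hεpos : 0 < ε := by positivity
  have hev : ∀ᶠ s in nhds s₀, ε < ctil s :=
    (hccont.tendsto s₀).eventually_const_lt (by rw [hε]; linarith)
  obtain ⟨r, hrpos, hball⟩ := Metric.eventually_nhds_iff_ball.1 hev
  -- the base measure of the ball is positive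
  have hdensmeas : Measurable (fun s : Fin n → ℝ => ENNReal.ofReal (∏ j', p j' (s j'))) := by
    refine ENNReal.measurable_ofReal.comp ?_
    exact (continuous_finset_prod _ fun j' _ => (hpc j').comp (continuous_apply j')).measurable
  have hμball : 0 < μ (Metric.ball s₀ r) := by
    rw [hμ, MeasureTheory.withDensity_apply _ measurableSet_ball]
    by_contra hzero
    push_neg at hzero
    have h0 : ∫⁻ s in Metric.ball s₀ r,
        ENNReal.ofReal (∏ j', p j' (s j')) ∂volume = 0 :=
      le_antisymm (le_of_not_gt (by simpa using hzero)) zero_le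
    rw [lintegral_eq_zero_iff hdensmeas] at h0
    have hne : {s : Fin n → ℝ | ENNReal.ofReal (∏ j', p j' (s j')) ≠ 0} = Set.univ := by
      ext s
      have hprod : 0 < ∏ j', p j' (s j') := Finset.prod_pos fun j' _ => hppos j' (s j')
      simp [ENNReal.ofReal_eq_zero, not_le, hprod]
    have := h0
    rw [Filter.EventuallyEq, ae_iff] at this
    simp only [Pi.zero_apply] at this
    have hvol : volume (Metric.ball s₀ r) = 0 := by
      have hrestr := this
      rw [Measure.restrict_apply₀'] at hrestr
      · rw [← hrestr]
        congr 1
        rw [hne, Set.univ_inter]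
      · exact measurableSet_ball.nullMeasurableSet
    exact absurd hvol (Metric.measure_ball_pos volume s₀ hrpos).ne'
  -- conclude
  have hglobal : globalIMAContrast (f ∘ a) μ = ∫⁻ s, ENNReal.ofReal (ctil s) ∂μ := by
    unfold globalIMAContrast
    congr 1
    funext s
    rw [hcontrast s]
  have hmeasc : Measurable fun s => ENNReal.ofReal (ctil s) :=
    ENNReal.measurable_ofReal.comp hccont.measurable
  have hchain : ENNReal.ofReal ε * μ (Metric.ball s₀ r)
      ≤ ∫⁻ s, ENNReal.ofReal (ctil s) ∂μ := by
    calc ENNReal.ofReal ε * μ (Metric.ball s₀ r)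
        = ∫⁻ _ in Metric.ball s₀ r, ENNReal.ofReal ε ∂μ := by
          rw [setLIntegral_const]
      _ ≤ ∫⁻ s in Metric.ball s₀ r, ENNReal.ofReal (ctil s) ∂μ := by
          refine setLIntegral_mono hmeasc fun s hs => ?_
          exact ENNReal.ofReal_le_ofReal (hball s hs).le
      _ ≤ ∫⁻ s, ENNReal.ofReal (ctil s) ∂μ := setLIntegral_le_lintegral _ _
  have hfinal : (0:ℝ≥0∞) < ENNReal.ofReal ε * μ (Metric.ball s₀ r) :=
    ENNReal.mul_pos (ENNReal.ofReal_pos.2 hεpos).ne' hμball.ne'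
  rw [ha] at hglobal
  rw [hglobal]
  exact lt_of_lt_of_le hfinal hchain
end
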